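/- Let k ≥ 2, p₁,…,p_k, q_{k+1} ∈ (0,1) with Σᵢ pᵢ = 1, and set qᵢ = (1-q_{k+1})pᵢ for 1 ≤ i ≤ k. If the tuple (H₁,…,H_k) of nonempty graphs is not (p₁,…,p_k)-common, then (H₁,…,H_k, H_{k+1}) is not (q₁,…,q_{k+1})-common for any nonempty graph H_{k+1}. -/
import Mathlib


open MeasureTheory Finset

/-- The uniform measure on the unit interval `[0,1]`, as a measure on `ℝ`. -/
noncomputable def unitM : Measure ℝ := volume.restrict (Set.Icc 0 1)

instance : SigmaFinite unitM := by unfold unitM; infer_instance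

/-- Value of a symmetric two-variable function on an unordered pair of vertices. -/
noncomputable def symEdge {α : Type*} (W : ℝ → ℝ → ℝ) (x : α → ℝ) : Sym2 α → ℝ :=
  Sym2.lift ⟨fun u v => (W (x u) (x v) + W (x v) (x u)) / 2, fun u v => by ring⟩

open Classical in
/-- Homomorphism density of a finite simple graph in a kernel. -/
noncomputable def homDensity {V : Type*} [Fintype V] (G : SimpleGraph V)
    (W : ℝ → ℝ → ℝ) : ℝ :=
  ∫ x : V → ℝ, ∏ e ∈ G.edgeFinset, symEdge W x e ∂(Measure.pi fun _ => unitM)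

/-- Number of edges of a graph. -/
noncomputable def eCount {V : Type*} (G : SimpleGraph V) : ℕ := G.edgeSet.ncard

def IsSymm2 (W : ℝ → ℝ → ℝ) : Prop := ∀ x y, W x y = W y x

/-- A kernel: bounded, symmetric, measurable. -/
def IsKernel (W : ℝ → ℝ → ℝ) : Prop :=
  Measurable (Function.uncurry W) ∧ IsSymm2 W ∧ ∃ C, ∀ x y, |W x y| ≤ C

/-- A graphon: symmetric measurable with values in `[0,1]`. -/
def IsGraphon (W : ℝ → ℝ → ℝ) : Prop :=
  Measurable (Function.uncurry W) ∧ IsSymm2 W ∧ ∀ x y, W x y ∈ Set.Icc (0:ℝ) 1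

/-- The pair `(G₁, G₂)` is `(p₁,p₂)`-common. -/
def IsCommonPair {V₁ V₂ : Type*} [Fintype V₁] [Fintype V₂]
    (G₁ : SimpleGraph V₁) (G₂ : SimpleGraph V₂) (p₁ p₂ : ℝ) : Prop :=
  ∀ W₁ W₂ : ℝ → ℝ → ℝ, IsGraphon W₁ → IsGraphon W₂ → (∀ x y, W₁ x y + W₂ x y = 1) →
    homDensity G₁ W₁ / (eCount G₁ * p₁ ^ (eCount G₁ - 1))
      + homDensity G₂ W₂ / (eCount G₂ * p₂ ^ (eCount G₂ - 1))
      ≥ p₁ / eCount G₁ + p₂ / eCount G₂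

/-- A tuple of graphs `(G i)` is `(p i)`-common if for all graphons `W i` summing
pointwise to `1`, `∑ i, t(G i, W i)/(e(G i)·(p i)^{e(G i)-1}) ≥ ∑ i, p i / e(G i)`. -/
def IsCommonFamily {ι : Type*} [Fintype ι] {V : ι → Type*} [∀ i, Fintype (V i)]
    (G : ∀ i, SimpleGraph (V i)) (p : ι → ℝ) : Prop :=
  ∀ W : ι → ℝ → ℝ → ℝ, (∀ i, IsGraphon (W i)) → (∀ x y, ∑ i, W i x y = 1) →
    ∑ i, homDensity (G i) (W i) / (eCount (G i) * p i ^ (eCount (G i) - 1))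
      ≥ ∑ i, p i / eCount (G i)

instance : IsProbabilityMeasure unitM := by
  constructor
  simp [unitM, Real.volume_Icc]

lemma symEdge_smul {α : Type*} (c : ℝ) (W : ℝ → ℝ → ℝ) (x : α → ℝ) (e : Sym2 α) :
    symEdge (fun a b => c * W a b) x e = c * symEdge W x e := by
  induction e using Sym2.ind with
  | _ u v => simp only [symEdge, Sym2.lift_mk]; ring

lemma symEdge_const {α : Type*} (q : ℝ) (x : α → ℝ) (e : Sym2 α) :
    symEdge (fun _ _ => q) x e = q := by
  induction e using Sym2.ind with
  | _ u v => simp only [symEdge, Sym2.lift_mk]; ring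

open Classical in
lemma eCount_eq_card {V : Type*} [Fintype V] (G : SimpleGraph V) :
    eCount G = G.edgeFinset.card := by
  rw [eCount, SimpleGraph.edgeFinset, Set.ncard_eq_toFinset_card']

lemma homDensity_const {V : Type*} [Fintype V] (G : SimpleGraph V) (q : ℝ) :
    homDensity G (fun _ _ => q) = q ^ eCount G := by
  classical
  rw [homDensity, eCount_eq_card]
  simp [symEdge_const]

lemma homDensity_smul {V : Type*} [Fintype V] (G : SimpleGraph V) (c : ℝ) (W : ℝ → ℝ → ℝ) :
    homDensity G (fun a b => c * W a b) = c ^ eCount G * homDensity G W := by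
  classical
  rw [homDensity, homDensity, eCount_eq_card]
  simp only [symEdge_smul, Finset.prod_mul_distrib, Finset.prod_const]
  rw [integral_const_mul]

/-- If the `k`-tuple `(H₁,…,H_k)` is not `(p₁,…,p_k)`-common, then for any
`q_{k+1} ∈ (0,1)` and `qᵢ = (1-q_{k+1})pᵢ`, the `(k+1)`-tuple `(H₁,…,H_{k+1})`
is not `(q₁,…,q_{k+1})`-common. -/
theorem not_common_extend (k : ℕ) (hk : 2 ≤ k)
    {V : Fin (k+1) → Type*} [∀ i, Fintype (V i)]
    (G : ∀ i, SimpleGraph (V i)) (hG : ∀ i, 1 ≤ eCount (G i))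
    (p : Fin k → ℝ) (hp : ∀ i, p i ∈ Set.Ioo (0:ℝ) 1) (hsum : ∑ i, p i = 1)
    (qlast : ℝ) (hq : qlast ∈ Set.Ioo (0:ℝ) 1)
    (hnot : ¬ IsCommonFamily (fun j : Fin k => G j.castSucc) p) :
    ¬ IsCommonFamily G
        (fun i => Fin.lastCases qlast (fun j => (1 - qlast) * p j) i) := by
  intro hcom
  apply hnot
  intro W hW hWsum
  set c : ℝ := 1 - qlast with hc
  have hc0 : 0 < c := by simp only [hc]; linarith [hq.2]
  have hc1 : c ≤ 1 := by simp only [hc]; linarith [hq.1]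
  set W' : Fin (k+1) → ℝ → ℝ → ℝ :=
    fun i => Fin.lastCases (fun _ _ => qlast) (fun j a b => c * W j a b) i with hW'
  have hW'cast : ∀ j : Fin k, W' j.castSucc = fun a b => c * W j a b := by
    intro j; simp [hW']
  have hW'last : W' (Fin.last k) = fun _ _ => qlast := by simp [hW']
  have hgraphon : ∀ i, IsGraphon (W' i) := by
    intro i
    refine Fin.lastCases ?_ ?_ i
    · rw [hW'last]
      exact ⟨measurable_const, fun _ _ => rfl, fun _ _ => ⟨le_of_lt hq.1, le_of_lt hq.2⟩⟩
    · intro j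
      rw [hW'cast]
      obtain ⟨hm, hs, hb⟩ := hW j
      refine ⟨?_, fun x y => ?_, fun x y => ?_⟩
      · exact (measurable_const.mul hm : Measurable fun z : ℝ × ℝ => c * Function.uncurry (W j) z)
      · show c * W j x y = c * W j y x
        rw [hs]
      · obtain ⟨h0, h1⟩ := hb x y
        exact ⟨mul_nonneg hc0.le h0, mul_le_one₀ hc1 h0 h1⟩
  have hsum' : ∀ x y, ∑ i, W' i x y = 1 := by
    intro x y
    rw [Fin.sum_univ_castSucc]
    simp only [hW'last]
    have : ∀ j : Fin k, W' j.castSucc x y = c * W j x y := fun j => by rw [hW'cast]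
    rw [Finset.sum_congr rfl fun j _ => this j, ← Finset.mul_sum, hWsum, mul_one]
    ring
  have key := hcom W' hgraphon hsum'
  rw [ge_iff_le, Fin.sum_univ_castSucc, Fin.sum_univ_castSucc] at key
  simp only [Fin.lastCases_last, Fin.lastCases_castSucc, hW'last] at key
  -- simplify the last term
  obtain ⟨m, hm⟩ : ∃ m, eCount (G (Fin.last k)) = m + 1 :=
    ⟨eCount (G (Fin.last k)) - 1, (Nat.sub_add_cancel (hG _)).symm⟩
  have hlast : homDensity (G (Fin.last k)) (fun _ _ => qlast) /
      (↑(eCount (G (Fin.last k))) * qlast ^ (eCount (G (Fin.last k)) - 1))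
      = qlast / ↑(eCount (G (Fin.last k))) := by
    rw [homDensity_const, hm]
    simp only [Nat.add_sub_cancel]
    have hq0 : (qlast:ℝ) ≠ 0 := ne_of_gt hq.1
    have he : ((m+1:ℕ):ℝ) ≠ 0 := by positivity
    have hqm : (qlast:ℝ) ^ m ≠ 0 := pow_ne_zero m hq0
    field_simp
    ring
  rw [hlast] at key
  -- simplify the castSucc terms
  have hterm : ∀ j : Fin k,
      homDensity (G j.castSucc) (W' j.castSucc) /
        (↑(eCount (G j.castSucc)) * (c * p j) ^ (eCount (G j.castSucc) - 1))
      = c * (homDensity (G j.castSucc) (W j) /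
        (↑(eCount (G j.castSucc)) * p j ^ (eCount (G j.castSucc) - 1))) := by
    intro j
    obtain ⟨n, hn⟩ : ∃ n, eCount (G j.castSucc) = n + 1 :=
      ⟨eCount (G j.castSucc) - 1, (Nat.sub_add_cancel (hG _)).symm⟩
    rw [hW'cast, homDensity_smul, hn]
    simp only [Nat.add_sub_cancel, mul_pow]
    have hcn : (c:ℝ) ^ n ≠ 0 := pow_ne_zero n (ne_of_gt hc0)
    have hpn : (p j:ℝ) ^ n ≠ 0 := pow_ne_zero n (ne_of_gt (hp j).1)
    have he : ((n+1:ℕ):ℝ) ≠ 0 := by positivity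
    rw [pow_succ]
    field_simp
  rw [Finset.sum_congr rfl fun j _ => hterm j, ← Finset.mul_sum] at key
  rw [Finset.sum_congr rfl (fun j _ =>
    (mul_div_assoc c (p j) ((eCount (G j.castSucc) : ℝ)))), ← Finset.mul_sum] at key
  have := le_of_add_le_add_right key
  exact le_of_mul_le_mul_left this hc0
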